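/- arXiv:0902.0623 — 7 statements merged into one kernel-verified Lean document; each statement's English description precedes it below -/
import Mathlib

section
/- For every implication sublattice A of B, the set Ā := A ∪ {xᶜ : x ∈ A} is a Boolean subalgebra of B, i.e., Ā contains 0 and 1 and is closed under join, meet and complement. -/
/-!
Joins are implications twice over, `x ⊔ y = (x → y) → y`, so `A` is closed under joins.
A join of two elements of `A ∪ Aᶜ` is then a join or an implication of elements of `A`, or the
complement of a meet; meets follow from joins by De Morgan.
-/

open scoped Classical

noncomputable section

/-- An implication sublattice of a Boolean algebra `B`: a nonempty subset closed under
the implication `x → y := xᶜ ⊔ y` and under meet. -/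
def IsImplSublattice {B : Type*} [BooleanAlgebra B] (A : Set B) : Prop :=
  A.Nonempty ∧ (∀ x ∈ A, ∀ y ∈ A, xᶜ ⊔ y ∈ A) ∧ (∀ x ∈ A, ∀ y ∈ A, x ⊓ y ∈ A)

/-- A Boolean subalgebra of `B`: a subset containing `⊥` and `⊤`, closed under
join, meet and complement. -/
def IsBoolSubalgebra {B : Type*} [BooleanAlgebra B] (C : Set B) : Prop :=
  (⊥ : B) ∈ C ∧ (⊤ : B) ∈ C ∧ (∀ x ∈ C, ∀ y ∈ C, x ⊔ y ∈ C) ∧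
    (∀ x ∈ C, ∀ y ∈ C, x ⊓ y ∈ C) ∧ (∀ x ∈ C, xᶜ ∈ C)

theorem IsBoolSubalgebra.of_sup_mem_of_compl_mem {B : Type*} [BooleanAlgebra B] {C : Set B}
    (hC : C.Nonempty) (hsup : ∀ x ∈ C, ∀ y ∈ C, x ⊔ y ∈ C) (hcompl : ∀ x ∈ C, xᶜ ∈ C) :
    IsBoolSubalgebra C := by
  obtain ⟨a, ha⟩ := hC
  have htop : (⊤ : B) ∈ C := by simpa using hsup a ha aᶜ (hcompl a ha)
  refine ⟨by simpa using hcompl ⊤ htop, htop, hsup, fun x hx y hy => ?_, hcompl⟩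
  simpa using hcompl _ (hsup _ (hcompl x hx) _ (hcompl y hy))

theorem compl_mem_union_compl_image {B : Type*} [BooleanAlgebra B] {A : Set B} {x : B}
    (hx : x ∈ A ∪ compl '' A) : xᶜ ∈ A ∪ compl '' A := by
  rcases hx with hx | ⟨x, hx, rfl⟩
  · exact Or.inr ⟨x, hx, rfl⟩
  · exact Or.inl (by simpa using hx)

namespace IsImplSublattice

variable {B : Type*} [BooleanAlgebra B] {A : Set B}

theorem compl_sup_mem (hA : IsImplSublattice A) {x y : B} (hx : x ∈ A) (hy : y ∈ A) :
    xᶜ ⊔ y ∈ A :=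
  hA.2.1 x hx y hy

theorem inf_mem (hA : IsImplSublattice A) {x y : B} (hx : x ∈ A) (hy : y ∈ A) : x ⊓ y ∈ A :=
  hA.2.2 x hx y hy

theorem sup_mem (hA : IsImplSublattice A) {x y : B} (hx : x ∈ A) (hy : y ∈ A) : x ⊔ y ∈ A := by
  have key : (xᶜ ⊔ y)ᶜ ⊔ y = x ⊔ y := by
    rw [compl_sup, compl_compl, sup_inf_right, compl_sup_eq_top, inf_top_eq]
  simpa only [key] using hA.compl_sup_mem (hA.compl_sup_mem hx hy) hy

theorem sup_mem_union_compl_image (hA : IsImplSublattice A) {x y : B}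
    (hx : x ∈ A ∪ compl '' A) (hy : y ∈ A ∪ compl '' A) : x ⊔ y ∈ A ∪ compl '' A := by
  rcases hx with hx | ⟨x, hx, rfl⟩ <;> rcases hy with hy | ⟨y, hy, rfl⟩
  · exact Or.inl (hA.sup_mem hx hy)
  · exact Or.inl (sup_comm x yᶜ ▸ hA.compl_sup_mem hy hx)
  · exact Or.inl (hA.compl_sup_mem hx hy)
  · exact Or.inr ⟨x ⊓ y, hA.inf_mem hx hy, compl_inf⟩

end IsImplSublattice

theorem closure_isBoolSubalgebra_general {B : Type*} [BooleanAlgebra B]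
    (A : Set B) (hA : IsImplSublattice A) :
    IsBoolSubalgebra (A ∪ compl '' A) :=
  .of_sup_mem_of_compl_mem (hA.1.mono Set.subset_union_left)
    (fun _ hx _ hy => hA.sup_mem_union_compl_image hx hy)
    (fun _ hx => compl_mem_union_compl_image hx)

/-- Lemma `lem:Bool`. For every implication sublattice `A` of `B`,
the set `Ā := A ∪ {xᶜ : x ∈ A}` is a Boolean subalgebra of `B`. -/
theorem closure_isBoolSubalgebra {B : Type*} [Fintype B] [BooleanAlgebra B] [Nontrivial B]
    (A : Set B) (hA : IsImplSublattice A) :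
    IsBoolSubalgebra (A ∪ compl '' A) :=
  closure_isBoolSubalgebra_general A hA
end
end

section
/- The map A ↦ Ā := A ∪ {xᶜ : x ∈ A} is a closure operator on the lattice 𝒜 of implication sublattices of B: for every A ∈ 𝒜 one has Ā ∈ 𝒜, A ⊆ Ā, the map is monotone with respect to inclusion, and Ā̄ = Ā. -/
open scoped Classical

noncomputable section

/-! By de Morgan, each implication or meet of elements of `A ∪ Aᶜ` is either an element of
`A` or the complement of one, built from elements of `A` by `→`, `⊓` or `⊔`; and `A` is closed
under `⊔` because `x ⊔ y = (x → y) → y`. Idempotence is `compl ∘ compl = id`. -/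

namespace IsImplSublattice

variable {B : Type*} [BooleanAlgebra B] {A : Set B}

theorem union_image_compl (hA : IsImplSublattice A) :
    IsImplSublattice (A ∪ compl '' A) := by
  have ⟨hne, himp, hinf⟩ := hA
  refine ⟨hne.mono Set.subset_union_left, ?_, ?_⟩
  · rintro x (hx | ⟨a, ha, rfl⟩) y (hy | ⟨b, hb, rfl⟩)
    · exact Or.inl (himp x hx y hy)
    · exact Or.inr ⟨x ⊓ b, hinf x hx b hb, compl_inf⟩
    · exact Or.inl (by simpa only [compl_compl] using hA.sup_mem ha hy)
    · exact Or.inl (by simpa only [compl_compl, sup_comm] using himp b hb a ha)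
  · rintro x (hx | ⟨a, ha, rfl⟩) y (hy | ⟨b, hb, rfl⟩)
    · exact Or.inl (hinf x hx y hy)
    · exact Or.inr ⟨xᶜ ⊔ b, himp x hx b hb, by rw [compl_sup, compl_compl]⟩
    · exact Or.inr ⟨yᶜ ⊔ a, himp y hy a ha, by rw [compl_sup, compl_compl, inf_comm]⟩
    · exact Or.inr ⟨a ⊔ b, hA.sup_mem ha hb, compl_sup⟩

end IsImplSublattice

theorem Set.union_image_compl_mono {B : Type*} [BooleanAlgebra B] {A₁ A₂ : Set B}
    (h : A₁ ⊆ A₂) : A₁ ∪ compl '' A₁ ⊆ A₂ ∪ compl '' A₂ :=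
  Set.union_subset_union h (Set.image_mono h)

theorem Set.union_image_compl_idem {B : Type*} [BooleanAlgebra B] (A : Set B) :
    (A ∪ compl '' A) ∪ compl '' (A ∪ compl '' A) = A ∪ compl '' A := by
  rw [Set.image_union, Set.compl_compl_image, Set.union_comm (compl '' A) A, Set.union_self]

theorem closure_is_closure_operator_general {B : Type*} [BooleanAlgebra B] :
    (∀ A : Set B, IsImplSublattice A → IsImplSublattice (A ∪ compl '' A)) ∧
    (∀ A : Set B, IsImplSublattice A → A ⊆ A ∪ compl '' A) ∧
    (∀ A₁ A₂ : Set B, IsImplSublattice A₁ → IsImplSublattice A₂ → A₁ ⊆ A₂ →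
      A₁ ∪ compl '' A₁ ⊆ A₂ ∪ compl '' A₂) ∧
    (∀ A : Set B, IsImplSublattice A →
      (A ∪ compl '' A) ∪ compl '' (A ∪ compl '' A) = A ∪ compl '' A) :=
  ⟨fun _ hA => hA.union_image_compl,
    fun _ _ => Set.subset_union_left,
    fun _ _ _ _ h => Set.union_image_compl_mono h,
    fun A _ => Set.union_image_compl_idem A⟩

/-- Lemma `lem:closure`. The map `A ↦ Ā := A ∪ {xᶜ : x ∈ A}` is a
closure operator on the lattice `𝒜` of implication sublattices of `B`: it maps `𝒜` to
`𝒜`, is extensive, monotone, and idempotent. -/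
theorem closure_is_closure_operator {B : Type*} [Fintype B] [BooleanAlgebra B] [Nontrivial B] :
    (∀ A : Set B, IsImplSublattice A → IsImplSublattice (A ∪ compl '' A)) ∧
    (∀ A : Set B, IsImplSublattice A → A ⊆ A ∪ compl '' A) ∧
    (∀ A₁ A₂ : Set B, IsImplSublattice A₁ → IsImplSublattice A₂ → A₁ ⊆ A₂ →
      A₁ ∪ compl '' A₁ ⊆ A₂ ∪ compl '' A₂) ∧
    (∀ A : Set B, IsImplSublattice A →
      (A ∪ compl '' A) ∪ compl '' (A ∪ compl '' A) = A ∪ compl '' A) :=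
  closure_is_closure_operator_general
end
end

section
/- Closure theorem for Möbius functions: Let X be a finite partial order and cl : X → X a closure operator on X (extensive, monotone and idempotent). Let X̄ = {x ∈ X : cl x = x} be the subposet of closed elements, with Möbius functions μ on X and μ̄ on X̄. Then for all y, z ∈ X: the sum of μ(y, x) over all x ∈ X with cl x = cl z equals μ̄(y, cl z) if y is closed (cl y = y), and equals 0 otherwise. -/
/-!
Write `S w = ∑_{cl x = w} μ(y, x)` for closed `w`. Since `x ≤ v ↔ cl x ≤ v` for closed `v`, the
fibres of `cl` over the closed `w ≤ v` partition `{x | x ≤ v}`, so `∑_{w ≤ v} S w` is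
`∑_{x ≤ v} μ(y, x) = δ(y, v)`. When `y` is closed, `μ̄(y, ·)` has the same sums over lower sets of
`X̄`; when it is not, they all vanish, as do those of `0`. A function on a finite poset is
determined by its sums over lower sets.
-/

open scoped Classical

noncomputable section

instance (priority := 100) fintypeLocallyFinite {X : Type*} [Fintype X] [Preorder X] :
    LocallyFiniteOrder X :=
  Fintype.toLocallyFiniteOrder

open Finset

section LowerSetSums

variable {α : Type*} [Fintype α] [PartialOrder α]

lemma eq_of_forall_sum_le_eq {M : Type*} [AddCancelCommMonoid M] {f g : α → M}
    (h : ∀ v, ∑ w with w ≤ v, f w = ∑ w with w ≤ v, g w) : f = g := by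
  funext v
  induction v using WellFoundedLT.induction with
  | ind v ih =>
    have hsplit (φ : α → M) : ∑ w with w ≤ v, φ w = φ v + ∑ w with w < v, φ w := by
      rw [← sum_insert (by simp)]
      congr 1
      ext w
      simp [le_iff_eq_or_lt]
    have hlt : ∑ w with w < v, f w = ∑ w with w < v, g w :=
      sum_congr rfl fun w hw => ih w (mem_filter.1 hw).2
    simpa [hsplit, hlt] using h v

lemma sum_filter_le_mu_right {𝕜 : Type*} [AddCommGroup 𝕜] [One 𝕜] [LocallyFiniteOrder α]
    [DecidableEq α] (y v : α) :
    ∑ x with x ≤ v, IncidenceAlgebra.mu 𝕜 y x = if y = v then 1 else 0 := by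
  rw [← IncidenceAlgebra.sum_Icc_mu_right]
  refine (sum_subset (fun x hx => by simp [(mem_Icc.1 hx).2]) fun x _ hx => ?_).symm
  exact IncidenceAlgebra.apply_eq_zero_of_not_le (fun hyx => hx (by simp_all)) _

end LowerSetSums

namespace ClosureOperator

variable {α : Type*} [Fintype α] [PartialOrder α] (c : ClosureOperator α)

lemma sum_fiberwise_closure {M : Type*} [AddCommMonoid M] (f : α → M) (v : {x // c x = x}) :
    ∑ w : {x // c x = x} with w ≤ v, ∑ x with c x = w, f x = ∑ x with x ≤ (v : α), f x := by
  have hv : c.IsClosed v := c.isClosed_iff.2 v.2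
  let toClosed (x : α) : {x // c x = x} := ⟨c x, c.idempotent x⟩
  calc ∑ w : {x // c x = x} with w ≤ v, ∑ x with c x = w, f x
      = ∑ w : {x // c x = x} with w ≤ v,
          ∑ x ∈ ({x | x ≤ (v : α)} : Finset α) with toClosed x = w, f x := by
        refine sum_congr rfl fun w hw => sum_congr ?_ fun _ _ => rfl
        ext x
        simp only [mem_filter, mem_univ, true_and, toClosed, Subtype.ext_iff]
        exact ⟨fun hx => ⟨(c.le_closure x).trans (hx ▸ (mem_filter.1 hw).2), hx⟩, And.right⟩
    _ = ∑ x with x ≤ (v : α), f x := by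
        refine sum_fiberwise_of_maps_to (g := toClosed) (fun x hx => ?_) f
        exact mem_filter.2 ⟨mem_univ _, c.closure_min (mem_filter.1 hx).2 hv⟩

theorem sum_mu_closure_eq {𝕜 : Type*} [AddCommGroup 𝕜] [One 𝕜] [LocallyFiniteOrder α]
    [LocallyFiniteOrder {x // c x = x}] (y : α) (v : {x // c x = x}) :
    ∑ x with c x = v, IncidenceAlgebra.mu 𝕜 y x =
      if hy : c y = y then IncidenceAlgebra.mu 𝕜 (⟨y, hy⟩ : {x // c x = x}) v else 0 := by
  let S (w : {x // c x = x}) : 𝕜 := ∑ x with c x = w, IncidenceAlgebra.mu 𝕜 y x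
  have hS (v) : ∑ w with w ≤ v, S w = if y = v then 1 else 0 :=
    (c.sum_fiberwise_closure _ v).trans (sum_filter_le_mu_right y v)
  split_ifs with hy
  · refine congrFun (eq_of_forall_sum_le_eq (f := S) fun v => ?_) v
    simp only [hS, sum_filter_le_mu_right, Subtype.ext_iff]
  · refine congrFun (eq_of_forall_sum_le_eq (f := S) (g := 0) fun v => ?_) v
    rw [hS, if_neg fun h : y = v => hy (h ▸ v.2)]
    simp

end ClosureOperator

/-- Theorem `thm:closure`, closure theorem for Möbius functions.
Let `X` be a finite partial order and `cl` a closure operator on `X` (extensive,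
monotone, idempotent).  Let `X̄ = {x : cl x = x}` be the subposet of closed elements.
Then for all `y z : X`, the sum of `μ(y, x)` over all `x` with `cl x = cl z` equals
`μ̄(y, cl z)` if `y` is closed, and `0` otherwise. -/
theorem moebius_closure_theorem {X : Type*} [Fintype X] [PartialOrder X]
    (cl : X → X) (hext : ∀ x, x ≤ cl x) (hmono : ∀ x y, x ≤ y → cl x ≤ cl y)
    (hidem : ∀ x, cl (cl x) = cl x) (y z : X) :
    (∑ x ∈ Finset.univ.filter fun x => cl x = cl z, IncidenceAlgebra.mu ℤ y x) =
      if hy : cl y = y then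
        IncidenceAlgebra.mu (α := {x : X // cl x = x}) ℤ ⟨y, hy⟩ ⟨cl z, hidem z⟩
      else 0 := by
  let c := ClosureOperator.mk' cl (fun _ _ => hmono _ _) hext fun x => (hidem x).le
  exact c.sum_mu_closure_eq y ⟨cl z, hidem z⟩
end
end

section
/- For an implication sublattice C of B, defining C̄ := C ∪ {xᶜ : x ∈ C}, one has C̄ = B if and only if C = B or C is an ultrafilter of B, i.e., C is an upward-closed, meet-closed subset not containing 0 such that for every x ∈ B exactly one of x, xᶜ belongs to C. -/
open scoped Classical

noncomputable section

/-! If every element or its complement lies in `C`, closure under `x → y = xᶜ ⊔ y` makes `C`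
upward closed: for `x ∈ C` and `x ≤ y`, either `y ∈ C` already or `yᶜ ∈ C`, and then
`yᶜ → x = y ⊔ x = y ∈ C`. An upward closed `C` containing `⊥` is everything; otherwise
closure under meets forbids `x, xᶜ ∈ C` simultaneously, since `x ⊓ xᶜ = ⊥`. -/

section

variable {B : Type*} [BooleanAlgebra B] {C : Set B}

theorem union_compl_image_eq_univ_iff :
    C ∪ compl '' C = Set.univ ↔ ∀ x, x ∈ C ∨ xᶜ ∈ C := by
  simp only [Set.eq_univ_iff_forall, Set.mem_union, Set.mem_compl_image]

theorem isUpperSet_of_forall_mem_or_compl_mem (himp : ∀ x ∈ C, ∀ y ∈ C, xᶜ ⊔ y ∈ C)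
    (hcover : ∀ x, x ∈ C ∨ xᶜ ∈ C) : IsUpperSet C := by
  intro x y hxy hx
  rcases hcover y with hy | hyc
  · exact hy
  · simpa [compl_compl, sup_eq_left.mpr hxy] using himp yᶜ hyc x hx

theorem bot_mem_of_mem_of_compl_mem (hmeet : ∀ x ∈ C, ∀ y ∈ C, x ⊓ y ∈ C) {x : B}
    (hx : x ∈ C) (hxc : xᶜ ∈ C) : ⊥ ∈ C :=
  inf_compl_eq_bot (a := x) ▸ hmeet x hx xᶜ hxc

end

theorem closure_eq_univ_iff_general {B : Type*} [BooleanAlgebra B]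
    (C : Set B) (hC : IsImplSublattice C) :
    C ∪ compl '' C = Set.univ ↔
      C = Set.univ ∨
        ((∀ x ∈ C, ∀ y : B, x ≤ y → y ∈ C) ∧ (∀ x ∈ C, ∀ y ∈ C, x ⊓ y ∈ C) ∧
          (⊥ : B) ∉ C ∧ ∀ x : B, Xor' (x ∈ C) (xᶜ ∈ C)) := by
  obtain ⟨-, himp, hmeet⟩ := hC
  rw [union_compl_image_eq_univ_iff]
  constructor
  · intro hcover
    have hup := isUpperSet_of_forall_mem_or_compl_mem himp hcover
    by_cases hbot : ⊥ ∈ C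
    · exact Or.inl (hup.bot_mem.mp hbot)
    refine Or.inr ⟨fun x hx y hxy => hup hxy hx, hmeet, hbot, fun x => ?_⟩
    exact (xor_iff_or_and_not_and _ _).mpr
      ⟨hcover x, fun ⟨hx, hxc⟩ => hbot (bot_mem_of_mem_of_compl_mem hmeet hx hxc)⟩
  · rintro (rfl | ⟨-, -, -, hxor⟩)
    · exact fun x => Or.inl (Set.mem_univ x)
    · exact fun x => Xor.or (hxor x)

/-- Lemma `lem:closEqB`. For an implication sublattice `C` of `B`,
`C̄ = B` iff `C = B` or `C` is an ultrafilter of `B`: an upward-closed, meet-closed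
subset not containing `⊥` such that for every `x` exactly one of `x`, `xᶜ` lies in `C`. -/
theorem closure_eq_univ_iff {B : Type*} [Fintype B] [BooleanAlgebra B] [Nontrivial B]
    (C : Set B) (hC : IsImplSublattice C) :
    C ∪ compl '' C = Set.univ ↔
      C = Set.univ ∨
        ((∀ x ∈ C, ∀ y : B, x ≤ y → y ∈ C) ∧ (∀ x ∈ C, ∀ y ∈ C, x ⊓ y ∈ C) ∧
          (⊥ : B) ∉ C ∧ ∀ x : B, Xor' (x ∈ C) (xᶜ ∈ C)) :=
  closure_eq_univ_iff_general C hC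
end
end

section
/- Let A be an implication sublattice of B with least element a := min A, and let c₁, c₂ be atoms of B with c₁ ≤ a and c₂ ≤ a. Then the intervals [A, [c₁,1]] and [A, [c₂,1]] in the lattice 𝒜 are order-isomorphic. -/
/-! The transposition of the atoms `c₁, c₂` induces an automorphism `φ` of `B ≅ 𝒫(atoms of B)`.
Being an order automorphism of a Boolean algebra, `φ` maps implication sublattices to implication
sublattices; it fixes every element above `c₁ ⊔ c₂`, hence `A` pointwise, and sends `[c₁,1]` onto
`[c₂,1]`. So `C ↦ φ '' C` is an isomorphism between the two intervals. -/

open scoped Classical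

noncomputable section

/-- The lattice `𝒜` of implication sublattices of `B`, ordered by inclusion. -/
abbrev ImplLat (B : Type*) [BooleanAlgebra B] : Type _ := {A : Set B // IsImplSublattice A}

namespace OrderIso

variable {α β : Type*} [LE α] [LE β]

def subtypeEquiv {p : α → Prop} {q : β → Prop} (e : α ≃o β) (h : ∀ a, p a ↔ q (e a)) :
    {a // p a} ≃o {b // q b} where
  toEquiv := e.toEquiv.subtypeEquiv h
  map_rel_iff' := e.le_iff_le

end OrderIso

namespace CompleteAtomicBooleanAlgebra

variable {α : Type*} [CompleteAtomicBooleanAlgebra α]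

theorem mem_toSetOfIsAtom {a : {a : α // IsAtom a}} {x : α} :
    a ∈ toSetOfIsAtom x ↔ (a : α) ≤ x :=
  Iff.rfl

theorem toSetOfIsAtom_atom (a : {a : α // IsAtom a}) : toSetOfIsAtom (a : α) = {a} := by
  ext b
  rw [mem_toSetOfIsAtom, Set.mem_singleton_iff, ← Subtype.coe_inj]
  exact a.2.le_iff_eq b.2.1

def atomPermOrderIso (σ : Equiv.Perm {a : α // IsAtom a}) : α ≃o α :=
  toSetOfIsAtom.trans (σ.toOrderIsoSet.trans toSetOfIsAtom.symm)

theorem atomPermOrderIso_atom (σ : Equiv.Perm {a : α // IsAtom a}) (a : {a : α // IsAtom a}) :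
    atomPermOrderIso σ a = σ a := by
  rw [atomPermOrderIso, OrderIso.trans_apply, OrderIso.trans_apply, toSetOfIsAtom_atom,
    Equiv.toOrderIsoSet_apply, Set.image_singleton, ← toSetOfIsAtom_atom,
    OrderIso.symm_apply_apply]

theorem atomPermOrderIso_eq_self (σ : Equiv.Perm {a : α // IsAtom a}) {x : α}
    (hx : ∀ a, σ a ≠ a → (a : α) ≤ x) : atomPermOrderIso σ x = x := by
  rw [atomPermOrderIso, OrderIso.trans_apply, OrderIso.trans_apply, Equiv.toOrderIsoSet_apply,
    Set.image_perm fun a ha => mem_toSetOfIsAtom.mpr (hx a ha), OrderIso.symm_apply_apply]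

end CompleteAtomicBooleanAlgebra

section ImplLat

variable {B B' : Type*} [BooleanAlgebra B] [BooleanAlgebra B']

theorem IsImplSublattice.image {A : Set B} (hA : IsImplSublattice A) (φ : B ≃o B') :
    IsImplSublattice (φ '' A) := by
  obtain ⟨hne, himp, hinf⟩ := hA
  refine ⟨hne.image φ, ?_, ?_⟩
  · rintro _ ⟨x, hx, rfl⟩ _ ⟨y, hy, rfl⟩
    exact ⟨xᶜ ⊔ y, himp x hx y hy, by rw [map_sup, map_compl']⟩
  · rintro _ ⟨x, hx, rfl⟩ _ ⟨y, hy, rfl⟩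
    exact ⟨x ⊓ y, hinf x hx y hy, map_inf φ x y⟩

def ImplLat.map (φ : B ≃o B') : ImplLat B ≃o ImplLat B' where
  toFun C := ⟨φ '' C.1, C.2.image φ⟩
  invFun C := ⟨φ.symm '' C.1, C.2.image φ.symm⟩
  left_inv C := Subtype.ext (φ.symm_image_image C.1)
  right_inv C := Subtype.ext (φ.image_symm_image C.1)
  map_rel_iff' := Set.image_subset_image_iff φ.injective

def ImplLat.intervalOrderIso (φ : B ≃o B') {A P : Set B} {A' P' : Set B'} (hA : φ '' A = A')
    (hP : φ '' P = P') :
    {C : ImplLat B // A ⊆ C.1 ∧ C.1 ⊆ P} ≃o {C : ImplLat B' // A' ⊆ C.1 ∧ C.1 ⊆ P'} :=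
  (ImplLat.map φ).subtypeEquiv fun C => by
    subst hA hP
    simp only [ImplLat.map, RelIso.coe_fn_mk, Equiv.coe_fn_mk,
      Set.image_subset_image_iff φ.injective]

end ImplLat

theorem intervals_above_atoms_orderIso_general {B : Type*} [Fintype B] [BooleanAlgebra B]
    (A : Set B) (a : B) (ha : IsLeast A a)
    (c₁ c₂ : B) (h₁ : IsAtom c₁) (h₂ : IsAtom c₂) (hc₁ : c₁ ≤ a) (hc₂ : c₂ ≤ a) :
    Nonempty ({C : ImplLat B // A ⊆ C.1 ∧ C.1 ⊆ Set.Ici c₁} ≃o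
      {C : ImplLat B // A ⊆ C.1 ∧ C.1 ⊆ Set.Ici c₂}) := by
  let _ := Fintype.toCompleteAtomicBooleanAlgebra B
  let φ := CompleteAtomicBooleanAlgebra.atomPermOrderIso (Equiv.swap ⟨c₁, h₁⟩ ⟨c₂, h₂⟩)
  have hφA : φ '' A = A := by
    refine Set.EqOn.image_eq_self fun x hx => ?_
    refine CompleteAtomicBooleanAlgebra.atomPermOrderIso_eq_self _ fun t ht => ?_
    rcases (Equiv.swap_apply_ne_self_iff.mp ht).2 with rfl | rfl
    exacts [hc₁.trans (ha.2 hx), hc₂.trans (ha.2 hx)]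
  have hφc : φ c₁ = c₂ := by
    rw [CompleteAtomicBooleanAlgebra.atomPermOrderIso_atom _ ⟨c₁, h₁⟩, Equiv.swap_apply_left]
  exact ⟨ImplLat.intervalOrderIso φ hφA (by rw [φ.image_Ici, hφc])⟩

/-- Lemma `lem:ufsAbove`. Let `A ∈ 𝒜` with least element `a`, and let
`c₁, c₂` be atoms of `B` below `a`.  Then the intervals `[A, [c₁,⊤]]` and `[A, [c₂,⊤]]`
of `𝒜` are order-isomorphic. -/
theorem intervals_above_atoms_orderIso {B : Type*} [Fintype B] [BooleanAlgebra B]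
    [Nontrivial B] (A : Set B) (hA : IsImplSublattice A) (a : B) (ha : IsLeast A a)
    (c₁ c₂ : B) (h₁ : IsAtom c₁) (h₂ : IsAtom c₂) (hc₁ : c₁ ≤ a) (hc₂ : c₂ ≤ a) :
    Nonempty ({C : ImplLat B // A ⊆ C.1 ∧ C.1 ⊆ Set.Ici c₁} ≃o
      {C : ImplLat B // A ⊆ C.1 ∧ C.1 ⊆ Set.Ici c₂}) :=
  intervals_above_atoms_orderIso_general A a ha c₁ c₂ h₁ h₂ hc₁ hc₂
end
end

section
/- The map sending a Boolean subalgebra C of B to the set partition of the atoms of B whose blocks are the sets {atoms of B below c}, for c ranging over the atoms of C, is a bijection from the set of Boolean subalgebras of B onto the set of partitions of the atoms of B; moreover for Boolean subalgebras C, D one has C ⊆ D if and only if the partition associated to D refines the partition associated to C. -/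
open scoped Classical

noncomputable section

/-- `d` is an atom of the subalgebra `C`: a minimal element of `C \ {⊥}`. -/
def IsAtomOf {B : Type*} [BooleanAlgebra B] (C : Set B) (d : B) : Prop :=
  d ∈ C ∧ d ≠ ⊥ ∧ ∀ x ∈ C, x ≠ ⊥ → x ≤ d → x = d

/-- The set partition of the atoms of `B` associated to a Boolean subalgebra `C`:
its blocks are the sets of atoms of `B` lying below `c`, for `c` an atom of `C`. -/
def blocksOf {B : Type*} [BooleanAlgebra B] (C : Set B) : Set (Set {c : B // IsAtom c}) :=
  {S | ∃ d : B, IsAtomOf C d ∧ S = {c : {c : B // IsAtom c} | c.1 ≤ d}}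

/-!
Identify each `x : B` with the set `atomsBelow x` of atoms below it; since a finite Boolean
algebra is atomic, this is an isomorphism onto all sets of atoms. An atom `d` of a Boolean
subalgebra `C` lies either below or disjoint from each element of `C`, and every atom of `B` lies
below exactly one atom of `C`, so the sets `atomsBelow d` form a partition. Conversely the elements
of `C` are exactly those whose atom sets are unions of blocks, so `C` is recovered from its
partition, and the unions of blocks of any partition form a subalgebra having that partition.
Likewise `C ⊆ D` exactly when every atom of `D` lies below some atom of `C`.
-/

section AtomsBelow

variable {B : Type*} [BooleanAlgebra B]

def atomsBelow (x : B) : Set {a : B // IsAtom a} := {a | a.1 ≤ x}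

@[simp]
lemma mem_atomsBelow {x : B} {a : {a : B // IsAtom a}} : a ∈ atomsBelow x ↔ a.1 ≤ x := Iff.rfl

lemma atomsBelow_bot : atomsBelow (⊥ : B) = ∅ :=
  Set.eq_empty_of_forall_notMem fun a ha => a.2.ne_bot (le_bot_iff.mp ha)

lemma atomsBelow_top : atomsBelow (⊤ : B) = Set.univ :=
  Set.eq_univ_of_forall fun _ => le_top

lemma atomsBelow_sup (x y : B) : atomsBelow (x ⊔ y) = atomsBelow x ∪ atomsBelow y := by
  ext a
  simp only [mem_atomsBelow, Set.mem_union, ← a.2.not_disjoint_iff_le, disjoint_sup_right,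
    not_and_or]

lemma atomsBelow_inf (x y : B) : atomsBelow (x ⊓ y) = atomsBelow x ∩ atomsBelow y := by
  ext a
  exact le_inf_iff

lemma atomsBelow_compl (x : B) : atomsBelow xᶜ = (atomsBelow x)ᶜ := by
  ext a
  simp only [mem_atomsBelow, Set.mem_compl_iff, le_compl_iff_disjoint_right,
    a.2.not_le_iff_disjoint]

lemma IsAtom.not_disjoint_of_le_of_le {a x y : B} (ha : IsAtom a) (hx : a ≤ x) (hy : a ≤ y) :
    ¬Disjoint x y :=
  fun h => ha.ne_bot (disjoint_self.mp (h.mono hx hy))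

lemma atomsBelow_subset_atomsBelow [IsAtomic B] {x y : B} :
    atomsBelow x ⊆ atomsBelow y ↔ x ≤ y :=
  ⟨fun h => BooleanAlgebra.le_iff_atom_le_imp.mpr fun a ha hax => @h ⟨a, ha⟩ hax,
    fun h _ hax => le_trans hax h⟩

lemma atomsBelow_injective [IsAtomic B] : Function.Injective (atomsBelow (B := B)) :=
  fun _ _ h => le_antisymm (atomsBelow_subset_atomsBelow.mp h.le)
    (atomsBelow_subset_atomsBelow.mp h.ge)

lemma disjoint_atomsBelow_iff [IsAtomic B] {x y : B} :
    Disjoint (atomsBelow x) (atomsBelow y) ↔ Disjoint x y := by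
  rw [disjoint_iff, disjoint_iff, ← atomsBelow_injective.eq_iff (a := x ⊓ y), atomsBelow_inf,
    atomsBelow_bot]
  rfl

lemma atomsBelow_nonempty [IsAtomic B] {x : B} (hx : x ≠ ⊥) : (atomsBelow x).Nonempty := by
  obtain ⟨a, ha, hax⟩ := (eq_bot_or_exists_atom_le x).resolve_left hx
  exact ⟨⟨a, ha⟩, hax⟩

lemma atomsBelow_surjective [Finite B] : Function.Surjective (atomsBelow (B := B)) := by
  have := Fintype.ofFinite B
  let := Fintype.toCompleteAtomicBooleanAlgebra B
  exact CompleteAtomicBooleanAlgebra.toSetOfIsAtom.surjective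

end AtomsBelow

section Subalgebra

variable {B : Type*} [BooleanAlgebra B] {C D : Set B}

lemma IsBoolSubalgebra.infClosed (hC : IsBoolSubalgebra C) : InfClosed C := hC.2.2.2.1

lemma IsAtomOf.le_or_disjoint (hC : InfClosed C) {d x : B} (hd : IsAtomOf C d) (hx : x ∈ C) :
    d ≤ x ∨ Disjoint d x := by
  by_cases h : d ⊓ x = ⊥
  · exact Or.inr (disjoint_iff.mpr h)
  · exact Or.inl (hd.2.2 _ (hC hd.1 hx) h inf_le_left ▸ inf_le_right)

lemma IsAtomOf.le_of_atom_le (hC : InfClosed C) {a d x : B} (hd : IsAtomOf C d) (hx : x ∈ C)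
    (ha : IsAtom a) (had : a ≤ d) (hax : a ≤ x) : d ≤ x :=
  (hd.le_or_disjoint hC hx).resolve_right (ha.not_disjoint_of_le_of_le had hax)

lemma IsAtomOf.eq_of_atom_le (hC : InfClosed C) {a d e : B} (hd : IsAtomOf C d)
    (he : IsAtomOf C e) (ha : IsAtom a) (had : a ≤ d) (hae : a ≤ e) : d = e :=
  le_antisymm (hd.le_of_atom_le hC he.1 ha had hae) (he.le_of_atom_le hC hd.1 ha hae had)

lemma exists_isAtomOf_ge [Finite B] (hC : IsBoolSubalgebra C) {a : B} (ha : IsAtom a) :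
    ∃ d, IsAtomOf C d ∧ a ≤ d := by
  obtain ⟨-, htop, -, hinf, hcompl⟩ := hC
  obtain ⟨d, ⟨hdC, had⟩, hmin⟩ :=
    exists_minimal_of_wellFoundedLT (fun x => x ∈ C ∧ a ≤ x) ⟨⊤, htop, le_top⟩
  refine ⟨d, ⟨hdC, ne_bot_of_le_ne_bot ha.ne_bot had, fun x hxC hx hxd => ?_⟩, had⟩
  by_cases hax : a ≤ x
  · exact le_antisymm hxd (hmin ⟨hxC, hax⟩ hxd)
  · -- otherwise `a ≤ d \ x ∈ C`, and minimality gives `x ≤ d ≤ xᶜ`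
    have hdx : d ≤ d ⊓ xᶜ := hmin ⟨hinf d hdC _ (hcompl x hxC),
      le_inf had (le_compl_iff_disjoint_right.mpr (ha.not_le_iff_disjoint.mp hax))⟩ inf_le_left
    exact absurd (le_compl_self.mp (hxd.trans (hdx.trans inf_le_right))) hx

lemma mem_iff_forall_isAtomOf [Finite B] (hC : IsBoolSubalgebra C) {x : B} :
    x ∈ C ↔ ∀ d, IsAtomOf C d → d ≤ x ∨ Disjoint d x := by
  refine ⟨fun hx d hd => hd.le_or_disjoint hC.infClosed hx, fun h => ?_⟩
  let atoms := (Set.toFinite {d | IsAtomOf C d ∧ d ≤ x}).toFinset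
  have hsup : atoms.sup id ∈ C :=
    Finset.sup_mem C hC.1 hC.2.2.1 _ _ fun d hd => ((Set.Finite.mem_toFinset _).mp hd).1.1
  suffices hx : x = atoms.sup id from hx ▸ hsup
  refine le_antisymm (BooleanAlgebra.le_iff_atom_le_imp.mpr fun a ha hax => ?_)
    (Finset.sup_le fun d hd => ((Set.Finite.mem_toFinset _).mp hd).2)
  obtain ⟨d, hd, had⟩ := exists_isAtomOf_ge hC ha
  have hdx : d ≤ x := (h d hd).resolve_right (ha.not_disjoint_of_le_of_le had hax)
  exact had.trans (Finset.le_sup (f := id) ((Set.Finite.mem_toFinset _).mpr ⟨hd, hdx⟩))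

lemma blocksOf_eq_image (C : Set B) : blocksOf C = atomsBelow '' {d | IsAtomOf C d} := by
  ext S
  simp only [blocksOf, Set.mem_ofPred_eq, Set.mem_image, eq_comm (a := S)]
  rfl

lemma isPartition_blocksOf [Finite B] (hC : IsBoolSubalgebra C) :
    Setoid.IsPartition (blocksOf C) := by
  refine ⟨fun ⟨d, hd, h⟩ => (atomsBelow_nonempty hd.2.1).ne_empty h.symm, fun a => ?_⟩
  obtain ⟨d, hd, had⟩ := exists_isAtomOf_ge hC a.2
  refine ⟨atomsBelow d, ⟨⟨d, hd, rfl⟩, had⟩, ?_⟩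
  rintro _ ⟨⟨e, he, rfl⟩, hae⟩
  rw [he.eq_of_atom_le hC.infClosed hd a.2 hae had]
  rfl

lemma subset_iff_refines [Finite B] (hC : IsBoolSubalgebra C) (hD : IsBoolSubalgebra D) :
    C ⊆ D ↔ ∀ S ∈ blocksOf D, ∃ T ∈ blocksOf C, S ⊆ T := by
  constructor
  · rintro h _ ⟨e, he, rfl⟩
    obtain ⟨a, hae⟩ := atomsBelow_nonempty he.2.1
    obtain ⟨d, hd, had⟩ := exists_isAtomOf_ge hC a.2
    exact ⟨atomsBelow d, ⟨d, hd, rfl⟩,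
      atomsBelow_subset_atomsBelow.mpr (he.le_of_atom_le hD.infClosed (h hd.1) a.2 hae had)⟩
  · intro h x hx
    refine (mem_iff_forall_isAtomOf hD).mpr fun e he => ?_
    obtain ⟨_, ⟨d, hd, rfl⟩, hed⟩ := h (atomsBelow e) ⟨e, he, rfl⟩
    have hed : e ≤ d := atomsBelow_subset_atomsBelow.mp hed
    exact ((mem_iff_forall_isAtomOf hC).mp hx d hd).imp hed.trans (Disjoint.mono_left hed)

end Subalgebra

section Partition

variable {B : Type*} [BooleanAlgebra B] {P : Set (Set {a : B // IsAtom a})}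

def unionsOfBlocks (P : Set (Set {a : B // IsAtom a})) : Set B :=
  {x | ∀ T ∈ P, T ⊆ atomsBelow x ∨ Disjoint T (atomsBelow x)}

lemma isBoolSubalgebra_unionsOfBlocks (P : Set (Set {a : B // IsAtom a})) :
    IsBoolSubalgebra (unionsOfBlocks P) := by
  refine ⟨fun T _ => ?_, fun T _ => ?_, fun x hx y hy T hT => ?_, fun x hx y hy T hT => ?_,
    fun x hx T hT => ?_⟩
  · simp [atomsBelow_bot]
  · simp [atomsBelow_top]
  · rw [atomsBelow_sup, Set.disjoint_union_right]
    rcases hx T hT with h | h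
    · exact Or.inl (h.trans Set.subset_union_left)
    · exact (hy T hT).imp (fun h' => h'.trans Set.subset_union_right) (⟨h, ·⟩)
  · rw [atomsBelow_inf, Set.subset_inter_iff]
    rcases hx T hT with h | h
    · exact (hy T hT).imp (⟨h, ·⟩) (·.mono_right Set.inter_subset_right)
    · exact Or.inr (h.mono_right Set.inter_subset_left)
  · rw [atomsBelow_compl, Set.subset_compl_iff_disjoint_right, Set.disjoint_compl_right_iff_subset]
    exact (hx T hT).symm

lemma unionsOfBlocks_blocksOf [Finite B] {C : Set B} (hC : IsBoolSubalgebra C) :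
    unionsOfBlocks (blocksOf C) = C := by
  ext x
  simp only [mem_iff_forall_isAtomOf hC, unionsOfBlocks, blocksOf_eq_image, Set.mem_ofPred_eq,
    Set.forall_mem_image, atomsBelow_subset_atomsBelow, disjoint_atomsBelow_iff]

lemma isAtomOf_unionsOfBlocks_of_mem [IsAtomic B] (hP : Setoid.IsPartition P) {x : B}
    (hx : atomsBelow x ∈ P) : IsAtomOf (unionsOfBlocks P) x := by
  have hne : x ≠ ⊥ := by
    rintro rfl
    exact hP.1 (atomsBelow_bot (B := B) ▸ hx)
  refine ⟨fun T hT => ?_, hne, fun y hy hy₀ hyx => ?_⟩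
  · by_cases h : T = atomsBelow x
    · exact Or.inl h.le
    · exact Or.inr (hP.pairwiseDisjoint hT hx h)
  · have hyx' := atomsBelow_subset_atomsBelow.mpr hyx
    refine le_antisymm hyx (atomsBelow_subset_atomsBelow.mp ((hy _ hx).resolve_right ?_))
    exact fun h => (atomsBelow_nonempty hy₀).ne_empty (disjoint_self.mp (h.mono_left hyx'))

lemma isAtomOf_unionsOfBlocks_iff [Finite B] (hP : Setoid.IsPartition P) {d : B} :
    IsAtomOf (unionsOfBlocks P) d ↔ atomsBelow d ∈ P := by
  refine ⟨fun hd => ?_, isAtomOf_unionsOfBlocks_of_mem hP⟩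
  obtain ⟨a, had⟩ := atomsBelow_nonempty hd.2.1
  obtain ⟨T, ⟨hT, haT⟩, -⟩ := hP.2 a
  obtain ⟨x, rfl⟩ := atomsBelow_surjective T
  have hx := isAtomOf_unionsOfBlocks_of_mem hP hT
  rwa [hd.eq_of_atom_le (isBoolSubalgebra_unionsOfBlocks P).infClosed hx a.2 had haT]

lemma blocksOf_unionsOfBlocks [Finite B] (hP : Setoid.IsPartition P) :
    blocksOf (unionsOfBlocks P) = P := by
  simp only [blocksOf_eq_image, isAtomOf_unionsOfBlocks_iff hP]
  exact Set.image_preimage_eq P atomsBelow_surjective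

end Partition

theorem boolSubalgebra_partition_bijection_general {B : Type*} [Fintype B] [BooleanAlgebra B] :
    Set.BijOn blocksOf {C : Set B | IsBoolSubalgebra C}
      {P : Set (Set {c : B // IsAtom c}) | Setoid.IsPartition P} ∧
    ∀ C D : Set B, IsBoolSubalgebra C → IsBoolSubalgebra D →
      (C ⊆ D ↔ ∀ S ∈ blocksOf D, ∃ T ∈ blocksOf C, S ⊆ T) := by
  have hinv : Set.InvOn unionsOfBlocks blocksOf {C : Set B | IsBoolSubalgebra C}
      {P | Setoid.IsPartition P} :=
    ⟨fun _ hC => unionsOfBlocks_blocksOf hC, fun _ hP => blocksOf_unionsOfBlocks hP⟩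
  exact ⟨hinv.bijOn (fun _ hC => isPartition_blocksOf hC)
    (fun P _ => isBoolSubalgebra_unionsOfBlocks P), fun _ _ => subset_iff_refines⟩

/-- The map sending a Boolean subalgebra `C` of `B` to the partition of
the atoms of `B` whose blocks are the sets of atoms below the atoms of `C` is a bijection
from the Boolean subalgebras of `B` onto the set partitions of the atoms of `B`; moreover
`C ⊆ D` iff the partition of `D` refines the partition of `C`. -/
theorem boolSubalgebra_partition_bijection {B : Type*} [Fintype B] [BooleanAlgebra B]
    [Nontrivial B] :
    Set.BijOn blocksOf {C : Set B | IsBoolSubalgebra C}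
      {P : Set (Set {c : B // IsAtom c}) | Setoid.IsPartition P} ∧
    ∀ C D : Set B, IsBoolSubalgebra C → IsBoolSubalgebra D →
      (C ⊆ D ↔ ∀ S ∈ blocksOf D, ∃ T ∈ blocksOf C, S ⊆ T) :=
  boolSubalgebra_partition_bijection_general
end
end

section
/- Let B have n atoms and let 1 ≤ k ≤ n. The number of Boolean subalgebras of B having exactly k atoms equals S(n,k), the Stirling number of the second kind. -/
open scoped Classical

noncomputable section

/-- The atoms of a Boolean subalgebra `C` of `B`: the minimal elements of `C \ {⊥}`. -/
def subAtoms {B : Type*} [BooleanAlgebra B] [Fintype B] (C : Set B) : Finset B :=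
  Finset.univ.filter fun d : B => d ∈ C ∧ d ≠ ⊥ ∧ ∀ x ∈ C, x ≠ ⊥ → x ≤ d → x = d

/-- `S(n, k)`, the Stirling number of the second kind: the number of set partitions of
`Fin n` into exactly `k` nonempty blocks. -/
def stirling (n k : ℕ) : ℕ :=
  Nat.card {P : Finpartition (Finset.univ : Finset (Fin n)) // P.parts.card = k}

/-!
The atoms of a Boolean subalgebra `C` of a finite Boolean algebra `B` form a partition of `⊤`
(pairwise disjoint nonzero elements with join `⊤`), and `C` consists exactly of the joins of
subsets of its atoms, i.e. of the elements that contain or are disjoint from each atom of `C`.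
Conversely the elements containing or disjoint from each part of a partition of `⊤` form a
subalgebra whose atoms are the parts. Since `B` is isomorphic to the powerset of its `n` atoms,
partitions of `⊤` into `k` parts are the set partitions of `Fin n` into `k` blocks.
-/

open Finset

section

variable {B : Type*} [BooleanAlgebra B]

namespace Finpartition

variable {α β : Type*} [Lattice α] [OrderBot α] [Lattice β] [OrderBot β]

def congrOrderIso (e : α ≃o β) {a : α} {b : β} (h : e a = b) :
    Finpartition a ≃ Finpartition b where
  toFun P := (P.map e).copy h
  invFun Q := (Q.map e.symm).copy (by rw [← h, OrderIso.symm_apply_apply])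
  left_inv P := by ext; simp [-mem_map_equiv, mem_map]
  right_inv Q := by ext; simp [-mem_map_equiv, mem_map]

lemma card_parts_congrOrderIso (e : α ≃o β) {a : α} {b : β} (h : e a = b) (P : Finpartition a) :
    #(congrOrderIso e h P).parts = #P.parts := by
  simp [congrOrderIso]

lemma card_finpartitions_congr (e : α ≃o β) {a : α} {b : β} (h : e a = b) (k : ℕ) :
    Nat.card {P : Finpartition a // #P.parts = k} =
      Nat.card {Q : Finpartition b // #Q.parts = k} :=
  Nat.card_congr <| (congrOrderIso e h).subtypeEquiv fun P => by
    rw [card_parts_congrOrderIso]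

end Finpartition

def orderIsoFinsetFinOfCardAtoms [Fintype B] {n : ℕ} (hn : Fintype.card {a : B // IsAtom a} = n) :
    B ≃o Finset (Fin n) :=
  letI := Fintype.toCompleteAtomicBooleanAlgebra B
  CompleteAtomicBooleanAlgebra.toSetOfIsAtom.trans <|
    (Fintype.equivFinOfCardEq hn).toOrderIsoSet.trans Fintype.finsetOrderIsoSet.symm

namespace IsBoolSubalgebra

variable {C : Set B}

lemma bot_mem (hC : IsBoolSubalgebra C) : ⊥ ∈ C := hC.1

lemma sup_mem (hC : IsBoolSubalgebra C) {x y : B} (hx : x ∈ C) (hy : y ∈ C) : x ⊔ y ∈ C :=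
  hC.2.2.1 x hx y hy

lemma inf_mem (hC : IsBoolSubalgebra C) {x y : B} (hx : x ∈ C) (hy : y ∈ C) : x ⊓ y ∈ C :=
  hC.2.2.2.1 x hx y hy

lemma compl_mem (hC : IsBoolSubalgebra C) {x : B} (hx : x ∈ C) : xᶜ ∈ C := hC.2.2.2.2 x hx

lemma finset_sup_mem (hC : IsBoolSubalgebra C) {s : Finset B} (hs : ∀ x ∈ s, x ∈ C) :
    s.sup id ∈ C :=
  sup_induction hC.bot_mem (fun _ hx _ hy => hC.sup_mem hx hy) hs

end IsBoolSubalgebra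

section SubAtoms

variable [Fintype B] {C : Set B}

lemma mem_subAtoms_iff_minimal {d : B} :
    d ∈ subAtoms C ↔ Minimal (fun x => x ∈ C ∧ x ≠ ⊥) d := by
  simp only [subAtoms, mem_filter, mem_univ, true_and, Minimal, and_imp, and_assoc]
  refine and_congr_right fun _ => and_congr_right fun _ => forall₂_congr fun x _ => ?_
  exact forall₂_congr fun _ hxd => ⟨fun h => h.ge, fun h => le_antisymm hxd h⟩

lemma mem_of_mem_subAtoms {d : B} (hd : d ∈ subAtoms C) : d ∈ C :=
  (mem_subAtoms_iff_minimal.1 hd).prop.1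

lemma ne_bot_of_mem_subAtoms {d : B} (hd : d ∈ subAtoms C) : d ≠ ⊥ :=
  (mem_subAtoms_iff_minimal.1 hd).prop.2

lemma exists_mem_subAtoms_le {x : B} (hx : x ∈ C) (hx0 : x ≠ ⊥) : ∃ d ∈ subAtoms C, d ≤ x := by
  obtain ⟨d, hdx, hd⟩ := exists_minimal_le_of_wellFoundedLT (fun y => y ∈ C ∧ y ≠ ⊥) x ⟨hx, hx0⟩
  exact ⟨d, mem_subAtoms_iff_minimal.2 hd, hdx⟩

namespace IsBoolSubalgebra

variable (hC : IsBoolSubalgebra C)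
include hC

lemma le_or_disjoint_of_mem_subAtoms {d x : B} (hd : d ∈ subAtoms C) (hx : x ∈ C) :
    d ≤ x ∨ Disjoint d x := by
  rw [mem_subAtoms_iff_minimal] at hd
  rw [disjoint_iff, or_comm]
  refine or_iff_not_imp_left.2 fun hdx => ?_
  exact inf_eq_left.1 (hd.eq_of_le ⟨hC.inf_mem hd.prop.1 hx, hdx⟩ inf_le_left)

lemma pairwiseDisjoint_subAtoms : (subAtoms C : Set B).PairwiseDisjoint id := by
  intro d hd d' hd' hne
  refine (hC.le_or_disjoint_of_mem_subAtoms hd (mem_of_mem_subAtoms hd')).resolve_left fun hle => ?_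
  exact hne ((mem_subAtoms_iff_minimal.1 hd').eq_of_le (mem_subAtoms_iff_minimal.1 hd).prop hle)

lemma sup_subAtoms : (subAtoms C).sup id = ⊤ := by
  set s := (subAtoms C).sup id
  have hs : s ∈ C := hC.finset_sup_mem fun _ => mem_of_mem_subAtoms
  by_contra hne
  obtain ⟨d, hd, hds⟩ := exists_mem_subAtoms_le (hC.compl_mem hs) fun h => hne (compl_eq_bot.1 h)
  have hd_le : d ≤ s := le_sup (f := id) hd
  exact ne_bot_of_mem_subAtoms hd ((le_compl_iff_disjoint_right.1 hds).eq_bot_of_le hd_le)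

def toFinpartition : Finpartition (⊤ : B) where
  parts := subAtoms C
  supIndep := supIndep_iff_pairwiseDisjoint.2 hC.pairwiseDisjoint_subAtoms
  sup_parts := hC.sup_subAtoms
  bot_notMem h := ne_bot_of_mem_subAtoms h rfl

end IsBoolSubalgebra

end SubAtoms

namespace Finpartition

variable (P : Finpartition (⊤ : B))

def subalgebra : Set B := {x | ∀ p ∈ P.parts, p ≤ x ∨ Disjoint p x}

variable {P}

lemma sup_parts_le_eq_self {x : B} (hx : x ∈ P.subalgebra) :
    {p ∈ P.parts | p ≤ x}.sup id = x := by
  refine le_antisymm (Finset.sup_le fun p hp => (mem_filter.1 hp).2) ?_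
  calc x = x ⊓ P.parts.sup id := by rw [P.sup_parts, inf_top_eq]
    _ = P.parts.sup fun p => x ⊓ p := sup_inf_distrib_left _ _ _
    _ ≤ _ := Finset.sup_le fun p hp => ?_
  rcases hx p hp with hpx | hpx
  · exact inf_le_right.trans (le_sup (f := id) (mem_filter.2 ⟨hp, hpx⟩))
  · simp [hpx.symm.eq_bot]

lemma isBoolSubalgebra_subalgebra : IsBoolSubalgebra P.subalgebra := by
  refine ⟨fun p _ => .inr disjoint_bot_right, fun p _ => .inl le_top, ?_, ?_, ?_⟩
  · intro x hx y hy p hp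
    rcases hx p hp with h | h
    · exact .inl (le_sup_of_le_left h)
    rcases hy p hp with h' | h'
    · exact .inl (le_sup_of_le_right h')
    · exact .inr (h.sup_right h')
  · intro x hx y hy p hp
    rcases hx p hp with h | h
    · rcases hy p hp with h' | h'
      · exact .inl (le_inf h h')
      · exact .inr (h'.inf_right' x)
    · exact .inr (h.inf_right y)
  · intro x hx p hp
    rcases hx p hp with h | h
    · exact .inr (disjoint_compl_right_iff.2 h)
    · exact .inl (le_compl_iff_disjoint_right.2 h)

lemma mem_subalgebra_of_mem_parts {p : B} (hp : p ∈ P.parts) : p ∈ P.subalgebra := by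
  intro q hq
  by_cases hqp : q = p
  · exact .inl hqp.le
  · exact .inr (P.disjoint hq hp hqp)

variable [Fintype B]

lemma subAtoms_subalgebra : subAtoms P.subalgebra = P.parts := by
  ext d
  rw [mem_subAtoms_iff_minimal]
  constructor
  · intro hd
    obtain ⟨p, hp, hpd⟩ : ∃ p ∈ P.parts, ¬ Disjoint p d := by
      by_contra! h
      exact hd.prop.2 (top_disjoint.1 (P.sup_parts ▸ Finset.disjoint_sup_left.2 h))
    have hle : p ≤ d := (hd.prop.1 p hp).resolve_right hpd
    rwa [← hd.eq_of_le ⟨mem_subalgebra_of_mem_parts hp, P.ne_bot hp⟩ hle]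
  · intro hp
    refine ⟨⟨mem_subalgebra_of_mem_parts hp, P.ne_bot hp⟩, fun x ⟨hx, hx0⟩ hxp => ?_⟩
    exact (hx d hp).resolve_right fun hdis => hx0 (hdis.symm.eq_bot_of_le hxp)

end Finpartition

section Correspondence

variable [Fintype B]

lemma IsBoolSubalgebra.subalgebra_toFinpartition {C : Set B} (hC : IsBoolSubalgebra C) :
    hC.toFinpartition.subalgebra = C := by
  ext x
  refine ⟨fun hx => ?_, fun hx d hd => hC.le_or_disjoint_of_mem_subAtoms hd hx⟩
  rw [← Finpartition.sup_parts_le_eq_self hx]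
  exact hC.finset_sup_mem fun d hd => mem_of_mem_subAtoms (mem_filter.1 hd).1

def boolSubalgebraEquivFinpartition :
    {C : Set B // IsBoolSubalgebra C} ≃ Finpartition (⊤ : B) where
  toFun C := C.2.toFinpartition
  invFun P := ⟨P.subalgebra, P.isBoolSubalgebra_subalgebra⟩
  left_inv C := Subtype.ext C.2.subalgebra_toFinpartition
  right_inv P := Finpartition.ext P.subAtoms_subalgebra

lemma card_boolSubalgebras_eq_card_finpartitions (k : ℕ) :
    Nat.card {C : Set B // IsBoolSubalgebra C ∧ #(subAtoms C) = k} =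
      Nat.card {P : Finpartition (⊤ : B) // #P.parts = k} :=
  Nat.card_congr <| (Equiv.subtypeSubtypeEquivSubtypeInter _ _).symm.trans
    (boolSubalgebraEquivFinpartition.subtypeEquiv fun _ => Iff.rfl)

end Correspondence

end

theorem card_boolSubalgebras_eq_stirling_general {B : Type*} [Fintype B] [BooleanAlgebra B]
    (n k : ℕ)
    (hn : n = (Finset.univ.filter fun c : B => IsAtom c).card) :
    Nat.card {C : Set B // IsBoolSubalgebra C ∧ (subAtoms C).card = k} = stirling n k := by
  let e : B ≃o Finset (Fin n) := orderIsoFinsetFinOfCardAtoms (by rw [Fintype.card_subtype, hn])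
  rw [card_boolSubalgebras_eq_card_finpartitions, stirling,
    Finpartition.card_finpartitions_congr e (by rw [OrderIso.map_top, Finset.top_eq_univ])]

/-- Let `B` have `n` atoms and `1 ≤ k ≤ n`.  The number of Boolean
subalgebras of `B` with exactly `k` atoms is the Stirling number `S(n, k)`. -/
theorem card_boolSubalgebras_eq_stirling {B : Type*} [Fintype B] [BooleanAlgebra B]
    [Nontrivial B] (n k : ℕ)
    (hn : n = (Finset.univ.filter fun c : B => IsAtom c).card) (hk : 1 ≤ k) (hkn : k ≤ n) :
    Nat.card {C : Set B // IsBoolSubalgebra C ∧ (subAtoms C).card = k} = stirling n k :=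
  card_boolSubalgebras_eq_stirling_general n k hn
end
end
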